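/- Let X be a path-connected topological space and x ∈ X. Then π₁^qs(X, x) = 1 if and only if there are no non-homotopic paths f, g : [0,1] → X with f(0) = g(0), f(1) = g(1), and f homotopically close to g rel ∂I; that is, π₁^qs(X, x) = 1 if and only if whenever a path f is homotopically close rel ∂I to a path g with the same endpoints, f is homotopic to g rel ∂I. -/

import Mathlib

open unitInterval

noncomputable section

attribute [local instance] Path.Homotopic.setoid

variable {X Y : Type*} [TopologicalSpace X] [TopologicalSpace Y]

/-- `HClose f g` : the path `f` is homotopically close to the path `g` rel `∂I`:
for every partition `0 = t₀ < t₁ < ⋯ < tₙ = 1` and every sequence of open sets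
`U₁, …, Uₙ` with `g [tᵢ₋₁, tᵢ] ⊆ Uᵢ`, there is a path `γ`, homotopic to `f` rel `∂I`,
with `γ [tᵢ₋₁, tᵢ] ⊆ Uᵢ` and `γ tᵢ = g tᵢ` for all `i`. -/
def HClose {a b : X} (f g : Path a b) : Prop :=
  ∀ (n : ℕ) (t : Fin (n + 1) → I), t 0 = 0 → t (Fin.last n) = 1 → StrictMono t →
    ∀ U : Fin n → Set X, (∀ i, IsOpen (U i)) →
      (∀ i : Fin n, g '' Set.Icc (t i.castSucc) (t i.succ) ⊆ U i) →
      ∃ γ : Path a b,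
        (∀ i : Fin n, γ '' Set.Icc (t i.castSucc) (t i.succ) ⊆ U i) ∧
        (∀ i : Fin (n + 1), γ (t i) = g (t i)) ∧ γ.Homotopic f

/-- The class of a loop at `x` as an element of the fundamental group. -/
def pathClass {x : X} (f : Path x x) : FundamentalGroup X x :=
  FundamentalGroup.fromPath ⟦f⟧

/-- The `H`-quasi-small loop set `π_H^qs(X, x)`. -/
def qsSet (x : X) (H : Set (FundamentalGroup X x)) : Set (FundamentalGroup X x) :=
  { p | ∃ f h : Path x x, pathClass f = p ∧ pathClass h ∈ H ∧ HClose f h }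

/-- The quasi-small loop group `π₁^qs(X, x)`. -/
def qs (x : X) : Set (FundamentalGroup X x) :=
  qsSet x (⊥ : Subgroup (FundamentalGroup X x))

/-- The Spanier group of `(X, x)` with respect to the cover `𝒰`. -/
def spanierCover (x : X) (𝒰 : Set (Set X)) : Subgroup (FundamentalGroup X x) :=
  Subgroup.closure { p | ∃ (y : X) (u : Path x y) (v : Path y y) (U : Set X),
    U ∈ 𝒰 ∧ Set.range v ⊆ U ∧ p = pathClass ((u.trans v).trans u.symm) }

/-- The (unbased) Spanier group `π₁^sp(X, x)`. -/
def spanierGroup (x : X) : Subgroup (FundamentalGroup X x) :=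
  ⨅ (𝒰 : Set (Set X)) (_ : ∀ U ∈ 𝒰, IsOpen U) (_ : ⋃₀ 𝒰 = Set.univ), spanierCover x 𝒰

/-- The small generated subgroup `π₁^sg(X, x)`. -/
def smallGenerated (x : X) : Subgroup (FundamentalGroup X x) :=
  Subgroup.closure { p | ∃ (y : X) (β : Path x y) (α : Path y y),
    HClose α (Path.refl y) ∧ p = pathClass ((β.trans α).trans β.symm) }

/-- `X` is homotopically path Hausdorff relative to `H ⊆ π₁(X, x)`. -/
def HPHausdorffRel (x : X) (H : Set (FundamentalGroup X x)) : Prop :=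
  ∀ (y : X) (α β : Path x y), pathClass (α.trans β.symm) ∉ H →
    ∃ (n : ℕ) (t : Fin (n + 1) → I), t 0 = 0 ∧ t (Fin.last n) = 1 ∧ StrictMono t ∧
      ∃ U : Fin n → Set X, (∀ i, IsOpen (U i)) ∧
        (∀ i : Fin n, α '' Set.Icc (t i.castSucc) (t i.succ) ⊆ U i) ∧
        ∀ γ : Path x y, (∀ i : Fin n, γ '' Set.Icc (t i.castSucc) (t i.succ) ⊆ U i) →
          (∀ i : Fin (n + 1), γ (t i) = α (t i)) → pathClass (γ.trans β.symm) ∉ H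

/-!
Reversing paths and concatenating with a fixed path preserve homotopic closeness. For
`g.trans d`, the partition points below `1/2` are doubled into a partition for `g` (the first point
at or beyond `1/2` becomes `1`), and a path `γ` close to `g` for this partition makes `γ.trans d`
close to `g.trans d` for the original one; the half of `d` is untouched. Reversal just reflects
partitions.

So if `f` is homotopically close to `g` from `a` to `b` and `c` joins `x` to `a`, the loop
`(c·f)·(c·g)⁻¹` is homotopically close to the null-homotopic loop `(c·g)·(c·g)⁻¹`. When
`π₁^qs(X, x)` is trivial the former is null-homotopic too, whence `f ≃ g`. Conversely, if close
paths are homotopic, a loop close to a null-homotopic loop is null-homotopic.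
-/

namespace unitInterval

def double (u : I) : I := Set.projIcc 0 1 zero_le_one (2 * u)

@[simp] lemma double_zero : double 0 = 0 := by
  ext
  simp [double]

lemma coe_double_of_le_half {u : I} (hu : (u : ℝ) ≤ 1 / 2) : (double u : ℝ) = 2 * u := by
  rw [double, Set.projIcc_of_mem _ ⟨by linarith [u.2.1], by linarith⟩]

lemma double_of_half_le {u : I} (hu : 1 / 2 ≤ (u : ℝ)) : double u = 1 :=
  Set.projIcc_of_right_le _ (by linarith)

lemma coe_double_le (u : I) : (double u : ℝ) ≤ 2 * u := by
  rw [double, Set.coe_projIcc]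
  exact max_le (by linarith [u.2.1]) (min_le_right _ _)

lemma monotone_double : Monotone double := fun _ _ huv =>
  Set.monotone_projIcc _ (by simpa using huv)

lemma double_lt_double {u v : I} (huv : u < v) (hu : (u : ℝ) < 1 / 2) : double u < double v := by
  rw [← Subtype.coe_lt_coe, coe_double_of_le_half hu.le]
  rcases le_total (v : ℝ) (1 / 2) with hv | hv
  · rw [coe_double_of_le_half hv]
    linarith [Subtype.coe_lt_coe.2 huv]
  · rw [double_of_half_le hv, Set.Icc.coe_one]
    linarith

end unitInterval

section Paths

variable {a b c : X}

lemma Path.trans_apply_of_le_half (γ : Path a b) (δ : Path b c) {u : I} (hu : (u : ℝ) ≤ 1 / 2) :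
    (γ.trans δ) u = γ (double u) := by
  rw [← Path.extend_extends', Path.extend_trans_of_le_half _ _ hu]
  rfl

lemma Path.trans_apply_of_half_le (γ : Path a b) (δ : Path b c) {u : I} (hu : 1 / 2 ≤ (u : ℝ)) :
    (γ.trans δ) u = δ.extend (2 * u - 1) := by
  rw [← Path.extend_extends', Path.extend_trans_of_half_le _ _ hu]

lemma Path.image_Icc_double_subset (γ : Path a b) (δ : Path b c) {u v : I}
    (hu : (u : ℝ) ≤ 1 / 2) : γ '' Set.Icc (double u) (double v) ⊆ (γ.trans δ) '' Set.Icc u v := by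
  rintro _ ⟨w, ⟨hw₁, hw₂⟩, rfl⟩
  have hw₁ : 2 * (u : ℝ) ≤ w := coe_double_of_le_half hu ▸ Subtype.coe_le_coe.2 hw₁
  have hw₂ : (w : ℝ) ≤ 2 * v := (Subtype.coe_le_coe.2 hw₂).trans (coe_double_le v)
  let w' : I := ⟨w / 2, by constructor <;> linarith [w.2.1, w.2.2]⟩
  have hw' : (w' : ℝ) ≤ 1 / 2 := by simp only [w']; linarith [w.2.2]
  refine ⟨w', ⟨Subtype.coe_le_coe.1 ?_, Subtype.coe_le_coe.1 ?_⟩, ?_⟩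
  · simp only [w']; linarith
  · simp only [w']; linarith
  · rw [Path.trans_apply_of_le_half _ _ hw']
    congr 1
    exact Subtype.ext (by rw [coe_double_of_le_half hw']; simp only [w']; ring)

lemma Path.symm_image_Icc_subset (γ : Path a b) (u v : I) :
    γ.symm '' Set.Icc (σ v) (σ u) ⊆ γ '' Set.Icc u v := by
  rintro _ ⟨w, ⟨hw₁, hw₂⟩, rfl⟩
  exact ⟨σ w, ⟨le_symm_comm.1 hw₂, symm_le_comm.1 hw₁⟩, rfl⟩

lemma Path.Homotopic.of_trans_symm {p q : Path a b}
    (h : (p.trans q.symm).Homotopic (Path.refl a)) : p.Homotopic q := by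
  rw [← Quotient.eq, Quotient.mk_trans, Quotient.mk_symm, Quotient.mk_refl] at h
  rw [← Quotient.eq]
  calc Quotient.mk p = (Quotient.mk p).trans ((Quotient.mk q).symm.trans (Quotient.mk q)) := by
        simp
    _ = Quotient.mk q := by rw [← Quotient.trans_assoc, h, Quotient.refl_trans]

lemma Path.Homotopic.cancel_left (e : Path c a) {p q : Path a b}
    (h : (e.trans p).Homotopic (e.trans q)) : p.Homotopic q := by
  rw [← Quotient.eq, Quotient.mk_trans, Quotient.mk_trans] at h
  rw [← Quotient.eq]
  calc Quotient.mk p = (Quotient.mk e).symm.trans ((Quotient.mk e).trans (Quotient.mk p)) := by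
        simp [← Quotient.trans_assoc]
    _ = Quotient.mk q := by
        rw [h, ← Quotient.trans_assoc, Quotient.symm_trans, Quotient.refl_trans]

end Paths

section HClose

variable {a b c : X}

lemma HClose.refl (f : Path a b) : HClose f f :=
  fun _ _ _ _ _ _ _ hf => ⟨f, hf, fun _ => rfl, .refl f⟩

lemma HClose.symm₂ {f g : Path a b} (h : HClose f g) : HClose f.symm g.symm := by
  intro n t ht0 htn hmono U hU hsub
  have hg : ∀ i, g '' Set.Icc ((σ ∘ t ∘ Fin.rev) i.castSucc) ((σ ∘ t ∘ Fin.rev) i.succ) ⊆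
      (U ∘ Fin.rev) i := fun i => by
    simpa [Fin.rev_castSucc, Fin.rev_succ] using
      (g.symm.symm_image_Icc_subset _ _).trans (hsub (Fin.rev i))
  obtain ⟨γ, hγU, hγg, hγf⟩ := h n (σ ∘ t ∘ Fin.rev) (by simp [htn]) (by simp [ht0])
    (strictAnti_symm.comp (hmono.comp_strictAnti Fin.rev_strictAnti)) _ (fun i => hU _) hg
  refine ⟨γ.symm, fun i => ?_, fun i => ?_, hγf.symm₂⟩
  · simpa [Fin.rev_castSucc, Fin.rev_succ] using
      (γ.symm_image_Icc_subset _ _).trans (hγU (Fin.rev i))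
  · simpa using hγg (Fin.rev i)

lemma HClose.whiskerRight {f g : Path a b} (h : HClose f g) (d : Path b c) :
    HClose (f.trans d) (g.trans d) := by
  intro n t ht0 htn hmono U hU hsub
  obtain ⟨k, hk, hk_min⟩ : ∃ k : Fin (n + 1), 1 / 2 ≤ (t k : ℝ) ∧ ∀ j < k, (t j : ℝ) < 1 / 2 := by
    obtain ⟨k, hk, hk_min⟩ := WellFounded.has_min wellFounded_lt {j | 1 / 2 ≤ (t j : ℝ)}
      ⟨Fin.last n, by norm_num [htn]⟩
    exact ⟨k, hk, fun j hj => not_le.1 fun hj' => hk_min j hj' hj⟩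
  have lt_half_iff : ∀ j, (t j : ℝ) < 1 / 2 ↔ j < k := fun j =>
    ⟨fun hj => not_le.1 fun hkj => hj.not_ge (hk.trans (hmono.monotone hkj)), hk_min j⟩
  let ι : Fin (k + 1) → Fin (n + 1) := Fin.castLE k.isLt
  have hs_mono : StrictMono (double ∘ t ∘ ι) := by
    refine Fin.strictMono_iff_lt_succ.2 fun i => double_lt_double (hmono ?_) ((lt_half_iff _).2 ?_)
    all_goals simp [ι, Fin.lt_def]
  have hgU : ∀ i : Fin k, g '' Set.Icc ((double ∘ t ∘ ι) i.castSucc) ((double ∘ t ∘ ι) i.succ) ⊆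
      U (Fin.castLE (by omega) i) := fun i =>
    (g.image_Icc_double_subset d ((lt_half_iff _).2 (by simp [ι, Fin.lt_def])).le).trans
      (hsub (Fin.castLE (by omega) i))
  obtain ⟨γ, hγU, hγg, hγf⟩ :=
    h k _ (by simp [ι, ht0]) (double_of_half_le hk) hs_mono _ (fun i => hU _) hgU
  refine ⟨γ.trans d, fun i => ?_, fun j => ?_, hγf.hcomp (.refl d)⟩
  · rintro _ ⟨u, ⟨hu₁, hu₂⟩, rfl⟩
    rcases le_or_gt (1 / 2) (u : ℝ) with hu | hu
    · rw [Path.trans_apply_of_half_le _ _ hu, ← Path.trans_apply_of_half_le g d hu]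
      exact hsub i ⟨u, ⟨hu₁, hu₂⟩, rfl⟩
    have hik : (i : ℕ) < k := by
      simpa [Fin.lt_def] using (lt_half_iff i.castSucc).1 ((Subtype.coe_le_coe.2 hu₁).trans_lt hu)
    rw [Path.trans_apply_of_le_half _ _ hu.le]
    exact hγU ⟨i, hik⟩ ⟨double u, ⟨monotone_double hu₁, monotone_double hu₂⟩, rfl⟩
  · rcases le_or_gt (1 / 2) (t j : ℝ) with hj | hj
    · rw [Path.trans_apply_of_half_le _ _ hj, Path.trans_apply_of_half_le _ _ hj]
    rw [Path.trans_apply_of_le_half _ _ hj.le, Path.trans_apply_of_le_half _ _ hj.le]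
    exact hγg ⟨j, by have := (lt_half_iff j).1 hj; omega⟩

lemma HClose.whiskerLeft (e : Path c a) {f g : Path a b} (h : HClose f g) :
    HClose (e.trans f) (e.trans g) := by
  simpa using (h.symm₂.whiskerRight e.symm).symm₂

end HClose

lemma pathClass_eq_one_iff {x : X} (f : Path x x) :
    pathClass f = 1 ↔ f.Homotopic (Path.refl x) :=
  Path.Homotopic.Quotient.eq

lemma pathClass_congr {x : X} {f g : Path x x} (h : f.Homotopic g) : pathClass f = pathClass g :=
  congrArg FundamentalGroup.fromPath (Path.Homotopic.Quotient.eq.2 h)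

/-- for a path-connected space `X`, `π₁^qs(X, x) = 1` if and only if
whenever a path is homotopically close rel `∂I` to a path with the same endpoints,
the two paths are homotopic rel `∂I`. -/
theorem stmt19 [PathConnectedSpace X] (x : X) :
    qs x = {(1 : FundamentalGroup X x)} ↔
      ∀ (a b : X) (f g : Path a b), HClose f g → f.Homotopic g := by
  constructor
  · intro hqs a b f g hfg
    let c : Path x a := (PathConnectedSpace.joined x a).somePath
    let e := c.trans g
    have hmem : pathClass ((c.trans f).trans e.symm) ∈ qs x :=
      ⟨_, e.trans e.symm, rfl, Subgroup.mem_bot.2 ((pathClass_eq_one_iff _).2 (.trans_symm e)),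
        (hfg.whiskerLeft c).whiskerRight e.symm⟩
    rw [hqs, Set.mem_singleton_iff, pathClass_eq_one_iff] at hmem
    exact hmem.of_trans_symm.cancel_left c
  · intro h
    refine Set.eq_singleton_iff_unique_mem.2 ⟨⟨Path.refl x, Path.refl x, ?_, ?_, .refl _⟩, ?_⟩
    · exact (pathClass_eq_one_iff _).2 (.refl _)
    · exact Subgroup.mem_bot.2 ((pathClass_eq_one_iff _).2 (.refl _))
    · rintro _ ⟨f, g, rfl, hg, hfg⟩
      exact (pathClass_congr (h x x f g hfg)).trans hg
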